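/- Let n ≥ 2, let C, D ∈ ℝ^{n×n} be symmetric, and fix V ∈ ℝ^{n×(n−1)} with Vᵀ·1 = 0 and Vᵀ V = I_{n−1}. For every Q ∈ ℝ^{(n−1)×(n−1)}, setting P = (1/n)·1 1ᵀ + V Q Vᵀ, one has tr(C P D Pᵀ) = (1/n²)(1ᵀ C 1)(1ᵀ D 1) + tr(Ĉ Q D̂ Qᵀ) + tr(Êᵀ Q), where Ĉ := Vᵀ C V, D̂ := Vᵀ D V, and Ê := (2/n)·Vᵀ C 1 1ᵀ D V. -/

import Mathlib

/-!
Write `P = K + M` with `K = (1/n)·1 1ᵀ` symmetric and `M = V Q Vᵀ`. Expanding `tr (C P D Pᵀ)`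
gives four terms; transposing shows that the two mixed ones coincide, and cyclicity of the trace
moves the outer factors `V`, `Vᵀ` of `M` onto `C` and `D`.
-/

open Matrix

namespace Matrix

variable {ι κ R : Type*} [Fintype ι] [Fintype κ] [CommSemiring R]

theorem trace_mul_ones_mul_ones (A B : Matrix ι ι R) :
    trace (A * of (fun _ _ => (1 : R)) * B * of (fun _ _ => (1 : R)))
      = (∑ i, ∑ j, A i j) * (∑ i, ∑ j, B i j) := by
  simp only [trace, diag, mul_apply, of_apply, mul_one, Finset.sum_mul, Finset.mul_sum]
  rw [Finset.sum_comm]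
  exact Finset.sum_comm_cycle

theorem trace_mul_conj (A : Matrix ι ι R) (V : Matrix ι κ R) (W : Matrix κ ι R)
    (X : Matrix κ κ R) : trace (A * (V * X * W)) = trace (W * A * V * X) := by
  rw [← Matrix.mul_assoc, trace_mul_comm]
  simp only [Matrix.mul_assoc]

theorem trace_mul_conj_mul_conj (A B : Matrix ι ι R) (V : Matrix ι κ R) (W : Matrix κ ι R)
    (X Y : Matrix κ κ R) :
    trace (A * (V * X * W) * B * (V * Y * W))
      = trace (W * A * V * X * (W * B * V) * Y) := by
  rw [trace_mul_conj]
  simp only [Matrix.mul_assoc]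

theorem trace_mul_mul_mul_transpose_of_isSymm {A B K M : Matrix ι ι R} (hA : A.IsSymm)
    (hB : B.IsSymm) (hK : K.IsSymm) : trace (A * K * B * Mᵀ) = trace (A * M * B * K) := by
  rw [← trace_transpose]
  simp only [transpose_mul, transpose_transpose, hA.eq, hB.eq, hK.eq, Matrix.mul_assoc]
  rw [trace_mul_comm A]
  simp only [Matrix.mul_assoc]

theorem trace_mul_add_mul_mul_add_transpose_of_isSymm {A B K M : Matrix ι ι R}
    (hA : A.IsSymm) (hB : B.IsSymm) (hK : K.IsSymm) :
    trace (A * (K + M) * B * (K + M)ᵀ)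
      = trace (A * K * B * K) + 2 * trace (A * M * B * K) + trace (A * M * B * Mᵀ) := by
  rw [transpose_add, hK.eq]
  simp only [Matrix.mul_add, Matrix.add_mul, trace_add,
    trace_mul_mul_mul_transpose_of_isSymm hA hB hK]
  ring

end Matrix

theorem trace_param_reduction (n : ℕ)
    (C D : Matrix (Fin n) (Fin n) ℝ) (hC : C.IsSymm) (hD : D.IsSymm)
    (V : Matrix (Fin n) (Fin (n - 1)) ℝ)
    (Q : Matrix (Fin (n - 1)) (Fin (n - 1)) ℝ)
    (P : Matrix (Fin n) (Fin n) ℝ)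
    (hP : P = Matrix.of (fun _ _ => 1 / (n : ℝ)) + V * Q * Vᵀ) :
    Matrix.trace (C * P * D * Pᵀ)
      = (1 / (n : ℝ) ^ 2) * (∑ i, ∑ j, C i j) * (∑ i, ∑ j, D i j)
        + Matrix.trace ((Vᵀ * C * V) * Q * (Vᵀ * D * V) * Qᵀ)
        + Matrix.trace
            (((2 / (n : ℝ)) • (Vᵀ * C * (Matrix.of (fun _ _ => (1 : ℝ)) : Matrix (Fin n) (Fin n) ℝ) * D * V))ᵀ * Q) := by
  set J : Matrix (Fin n) (Fin n) ℝ := of fun _ _ => 1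
  have hJ : J.IsSymm := rfl
  have hP' : P = (1 / (n : ℝ)) • J + V * Q * Vᵀ := by
    rw [hP]
    congr 1
    ext
    simp [J]
  have hM : (V * Q * Vᵀ)ᵀ = V * Qᵀ * Vᵀ := by
    simp only [transpose_mul, transpose_transpose, Matrix.mul_assoc]
  have constant : trace (C * J * D * J) = (∑ i, ∑ j, C i j) * (∑ i, ∑ j, D i j) :=
    trace_mul_ones_mul_ones C D
  have mixed : trace (C * (V * Q * Vᵀ) * D * J) = trace ((Vᵀ * C * J * D * V)ᵀ * Q) := by
    rw [Matrix.mul_assoc _ D, trace_mul_cycle, trace_mul_conj]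
    simp only [transpose_mul, hC.eq, hD.eq, hJ.eq, transpose_transpose, Matrix.mul_assoc]
  rw [hP', trace_mul_add_mul_mul_add_transpose_of_isSymm hC hD (hJ.smul _), hM,
    trace_mul_conj_mul_conj]
  simp only [Matrix.mul_smul, Matrix.smul_mul, trace_smul, constant, mixed, transpose_smul,
    smul_eq_mul]
  ring
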